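/- Let X1, X2, X3 be mutually independent finite random variables and Y, Z two other finite random variables. Then I(X1; Y | X2, X3) + I(X1, X2, X3; Y) − I(X1, X2, X3; Z) ≤ I(X1, X3; Y | X2) + I(X1, X2; Y | X3) − I(X1, X2, X3; Z). -/
import Mathlib


open Finset

noncomputable def rvDist {Ω : Type*} [Fintype Ω] {A : Type*} [Fintype A] [DecidableEq A]
    (p : Ω → ℝ) (X : Ω → A) (a : A) : ℝ :=
  ∑ ω, if X ω = a then p ω else 0

noncomputable def rvEnt {Ω : Type*} [Fintype Ω] {A : Type*} [Fintype A] [DecidableEq A]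
    (p : Ω → ℝ) (X : Ω → A) : ℝ :=
  ∑ a, Real.negMulLog (rvDist p X a)

/-- Mutual information `I(X; Y)`. -/
noncomputable def rvMI {Ω : Type*} [Fintype Ω] {A B : Type*} [Fintype A] [DecidableEq A]
    [Fintype B] [DecidableEq B] (p : Ω → ℝ) (X : Ω → A) (Y : Ω → B) : ℝ :=
  rvEnt p X + rvEnt p Y - rvEnt p (fun ω => (X ω, Y ω))

/-- Conditional mutual information `I(X; Y | Z)`. -/
noncomputable def rvCMI {Ω : Type*} [Fintype Ω] {A B C : Type*} [Fintype A] [DecidableEq A]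
    [Fintype B] [DecidableEq B] [Fintype C] [DecidableEq C]
    (p : Ω → ℝ) (X : Ω → A) (Y : Ω → B) (Z : Ω → C) : ℝ :=
  rvEnt p (fun ω => (X ω, Z ω)) + rvEnt p (fun ω => (Y ω, Z ω))
    - rvEnt p (fun ω => (X ω, Y ω, Z ω)) - rvEnt p Z

section AuxLemmas

open Real

lemma pointwise_aux' (x a b y : ℝ) (hx : 0 ≤ x) (ha : x ≤ a) (hb : x ≤ b) (hy : x ≤ y)
    (ha0 : 0 ≤ a) (hb0 : 0 ≤ b) (hy0 : 0 ≤ y) :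
    x * log a + x * log b - x * log x - x * log y ≤ a * b / y - x := by
  rcases eq_or_lt_of_le hx with h | h
  · rw [← h]
    simp only [zero_mul, sub_zero, add_zero, sub_zero]
    positivity
  · have ha' : 0 < a := lt_of_lt_of_le h ha
    have hb' : 0 < b := lt_of_lt_of_le h hb
    have hy' : 0 < y := lt_of_lt_of_le h hy
    have ht : (0:ℝ) < a * b / (x * y) := by positivity
    have hlog : log (a * b / (x * y)) ≤ a * b / (x * y) - 1 := log_le_sub_one_of_pos ht
    have hexp : log (a * b / (x * y)) = log a + log b - log x - log y := by
      rw [Real.log_div (by positivity) (by positivity), Real.log_mul ha'.ne' hb'.ne',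
        Real.log_mul h.ne' hy'.ne']
      ring
    have h2 := mul_le_mul_of_nonneg_left hlog hx
    rw [hexp] at h2
    have hxt : x * (a * b / (x * y) - 1) = a * b / y - x := by
      field_simp
    nlinarith [h2, hxt]

lemma submodular_aux' {B U V : Type*} [Fintype B] [Fintype U] [Fintype V]
    (q : B → U → V → ℝ) (hq : ∀ b u v, 0 ≤ q b u v) :
    (∑ b, ∑ u, ∑ v, Real.negMulLog (q b u v)) + ∑ b, Real.negMulLog (∑ u, ∑ v, q b u v)
      ≤ (∑ b, ∑ u, Real.negMulLog (∑ v, q b u v))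
        + ∑ b, ∑ v, Real.negMulLog (∑ u, q b u v) := by
  have hqU0 : ∀ b u, 0 ≤ ∑ v, q b u v := fun b u => Finset.sum_nonneg fun v _ => hq b u v
  have hqV0 : ∀ b v, 0 ≤ ∑ u, q b u v := fun b v => Finset.sum_nonneg fun u _ => hq b u v
  have hqY0 : ∀ b, 0 ≤ ∑ u, ∑ v, q b u v := fun b => Finset.sum_nonneg fun u _ => hqU0 b u
  have hle_U : ∀ b u v, q b u v ≤ ∑ v', q b u v' := fun b u v =>
    Finset.single_le_sum (fun v' _ => hq b u v') (Finset.mem_univ v)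
  have hle_V : ∀ b u v, q b u v ≤ ∑ u', q b u' v := fun b u v =>
    Finset.single_le_sum (fun u' _ => hq b u' v) (Finset.mem_univ u)
  have hle_Y : ∀ b u v, q b u v ≤ ∑ u', ∑ v', q b u' v' := fun b u v =>
    le_trans (hle_U b u v) (Finset.single_le_sum (fun u' _ => hqU0 b u') (Finset.mem_univ u))
  have key : ∑ b, ∑ u, ∑ v, (q b u v * log (∑ v', q b u v') + q b u v * log (∑ u', q b u' v)
      - q b u v * log (q b u v) - q b u v * log (∑ u', ∑ v', q b u' v')) ≤ 0 := by
    have step : ∑ b, ∑ u, ∑ v, (q b u v * log (∑ v', q b u v') + q b u v * log (∑ u', q b u' v)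
        - q b u v * log (q b u v) - q b u v * log (∑ u', ∑ v', q b u' v'))
        ≤ ∑ b, ∑ u, ∑ v, ((∑ v', q b u v') * (∑ u', q b u' v) / (∑ u', ∑ v', q b u' v')
            - q b u v) := by
      refine Finset.sum_le_sum fun b _ => Finset.sum_le_sum fun u _ =>
        Finset.sum_le_sum fun v _ => ?_
      exact pointwise_aux' _ _ _ _ (hq b u v)
        (hle_U b u v) (hle_V b u v) (hle_Y b u v) (hqU0 b u) (hqV0 b v) (hqY0 b)
    refine le_trans step (le_of_eq ?_)
    refine Finset.sum_eq_zero fun b _ => ?_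
    simp only [Finset.sum_sub_distrib]
    rcases eq_or_lt_of_le (hqY0 b) with h | h
    · have h0 : ∀ u ∈ Finset.univ, (∑ v, q b u v) = 0 :=
        (Finset.sum_eq_zero_iff_of_nonneg (fun u _ => hqU0 b u)).1 h.symm
      have hquv : ∀ u v, q b u v = 0 := fun u v =>
        le_antisymm (h0 u (Finset.mem_univ u) ▸ hle_U b u v) (hq b u v)
      simp [hquv]
    · have h1 : ∑ u, ∑ v, ((∑ v', q b u v') * (∑ u', q b u' v) / (∑ u', ∑ v', q b u' v'))
          = ∑ u', ∑ v', q b u' v' := by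
        simp only [div_eq_mul_inv, ← Finset.sum_mul]
        rw [← Finset.sum_mul_sum]
        have hV : ∑ v, ∑ u', q b u' v = ∑ u', ∑ v', q b u' v' := Finset.sum_comm
        rw [hV, mul_inv_cancel_right₀ h.ne']
      rw [h1, sub_self]
  have eU : ∀ b u, Real.negMulLog (∑ v, q b u v) = ∑ v, -(q b u v * log (∑ v', q b u v')) := by
    intro b u
    rw [Real.negMulLog_eq_neg]
    simp only [Finset.sum_neg_distrib, Finset.sum_mul]
  have eV : ∀ b v, Real.negMulLog (∑ u, q b u v) = ∑ u, -(q b u v * log (∑ u', q b u' v)) := by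
    intro b v
    rw [Real.negMulLog_eq_neg]
    simp only [Finset.sum_neg_distrib, Finset.sum_mul]
  have eY : ∀ b, Real.negMulLog (∑ u, ∑ v, q b u v)
      = ∑ u, ∑ v, -(q b u v * log (∑ u', ∑ v', q b u' v')) := by
    intro b
    rw [Real.negMulLog_eq_neg]
    simp only [Finset.sum_neg_distrib, Finset.sum_mul]
  have eq' : ∀ b u v, Real.negMulLog (q b u v) = -(q b u v * log (q b u v)) := fun b u v => by
    rw [Real.negMulLog_eq_neg]
  calc (∑ b, ∑ u, ∑ v, Real.negMulLog (q b u v)) + ∑ b, Real.negMulLog (∑ u, ∑ v, q b u v)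
      = ∑ b, ∑ u, ∑ v, (-(q b u v * log (q b u v))
          + -(q b u v * log (∑ u', ∑ v', q b u' v'))) := by
        simp only [eq', eY, Finset.sum_add_distrib]
    _ ≤ ∑ b, ∑ u, ∑ v, (-(q b u v * log (∑ v', q b u v'))
          + -(q b u v * log (∑ u', q b u' v))) := by
        simp only [Finset.sum_sub_distrib, Finset.sum_add_distrib, Finset.sum_neg_distrib]
          at key ⊢
        linarith
    _ = (∑ b, ∑ u, Real.negMulLog (∑ v, q b u v))
          + ∑ b, ∑ v, Real.negMulLog (∑ u, q b u v) := by
        simp only [eU, eV, Finset.sum_add_distrib]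
        congr 1
        refine Finset.sum_congr rfl fun b _ => ?_
        exact Finset.sum_comm

variable {Ω : Type*} [Fintype Ω] {A A' D E : Type*} [Fintype A] [DecidableEq A]
  [Fintype A'] [DecidableEq A'] [Fintype D] [DecidableEq D] [Fintype E] [DecidableEq E]
  (p : Ω → ℝ)

lemma rvDist_nonneg (hp : ∀ ω, 0 ≤ p ω) (X : Ω → A) (a : A) : 0 ≤ rvDist p X a :=
  Finset.sum_nonneg fun ω _ => by
    by_cases h : X ω = a <;> simp [h, hp ω]

lemma rvDist_sum (X : Ω → A) : ∑ a, rvDist p X a = ∑ ω, p ω := by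
  unfold rvDist
  rw [Finset.sum_comm]
  exact Finset.sum_congr rfl fun ω _ => by simp

lemma rvDist_marg_snd (X : Ω → A) (W : Ω → D) (a : A) :
    ∑ w, rvDist p (fun ω => (X ω, W ω)) (a, w) = rvDist p X a := by
  unfold rvDist
  rw [Finset.sum_comm]
  refine Finset.sum_congr rfl fun ω _ => ?_
  by_cases h : X ω = a <;> simp [Prod.ext_iff, h]

lemma rvDist_marg_fst (X : Ω → A) (W : Ω → D) (w : D) :
    ∑ a, rvDist p (fun ω => (X ω, W ω)) (a, w) = rvDist p W w := by
  unfold rvDist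
  rw [Finset.sum_comm]
  refine Finset.sum_congr rfl fun ω _ => ?_
  by_cases h : W ω = w <;> simp [Prod.ext_iff, h]

lemma rvDist_marg_mid (X : Ω → A) (U : Ω → D) (V : Ω → E) (a : A) (v : E) :
    ∑ u, rvDist p (fun ω => (X ω, U ω, V ω)) (a, u, v)
      = rvDist p (fun ω => (X ω, V ω)) (a, v) := by
  unfold rvDist
  rw [Finset.sum_comm]
  refine Finset.sum_congr rfl fun ω _ => ?_
  by_cases h : X ω = a ∧ V ω = v
  · simp [Prod.ext_iff, h.1, h.2, and_left_comm]
  · rw [if_neg (by simp [Prod.ext_iff]; tauto)]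
    refine Finset.sum_eq_zero fun u _ => if_neg (by simp [Prod.ext_iff]; tauto)

lemma rvDist_marg_last (X : Ω → A) (U : Ω → D) (V : Ω → E) (a : A) (u : D) :
    ∑ v, rvDist p (fun ω => (X ω, U ω, V ω)) (a, u, v)
      = rvDist p (fun ω => (X ω, U ω)) (a, u) := by
  unfold rvDist
  rw [Finset.sum_comm]
  refine Finset.sum_congr rfl fun ω _ => ?_
  by_cases h : X ω = a ∧ U ω = u
  · simp [Prod.ext_iff, h.1, h.2]
  · rw [if_neg (by simp [Prod.ext_iff]; tauto)]
    refine Finset.sum_eq_zero fun v _ => if_neg (by simp [Prod.ext_iff]; tauto)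

lemma rvEnt_comp (f : A → A') (hf : Function.Injective f) (X : Ω → A) :
    rvEnt p (fun ω => f (X ω)) = rvEnt p X := by
  unfold rvEnt
  have h2 : ∀ a' ∉ Finset.univ.image f, rvDist p (fun ω => f (X ω)) a' = 0 := by
    intro a' ha'
    refine Finset.sum_eq_zero fun ω _ => ?_
    rw [if_neg]
    intro h
    exact ha' (Finset.mem_image.2 ⟨X ω, Finset.mem_univ _, h⟩)
  rw [← Finset.sum_subset (Finset.subset_univ (Finset.univ.image f))
    (fun x _ hx => by rw [h2 x hx, Real.negMulLog_zero]),
    Finset.sum_image (fun a _ b _ h => hf h)]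
  refine Finset.sum_congr rfl fun a _ => ?_
  congr 1
  unfold rvDist
  exact Finset.sum_congr rfl fun ω _ => by simp [hf.eq_iff]

end AuxLemmas

theorem stmt12 {Ω A1 A2 A3 B C : Type*} [Fintype Ω]
    [Fintype A1] [DecidableEq A1] [Fintype A2] [DecidableEq A2]
    [Fintype A3] [DecidableEq A3] [Fintype B] [DecidableEq B] [Fintype C] [DecidableEq C]
    (p : Ω → ℝ) (hp : ∀ ω, 0 ≤ p ω) (hsum : ∑ ω, p ω = 1)
    (X1 : Ω → A1) (X2 : Ω → A2) (X3 : Ω → A3) (Y : Ω → B) (Z : Ω → C)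
    (hindep : ∀ a1 a2 a3, rvDist p (fun ω => (X1 ω, X2 ω, X3 ω)) (a1, a2, a3)
      = rvDist p X1 a1 * rvDist p X2 a2 * rvDist p X3 a3) :
    rvCMI p X1 Y (fun ω => (X2 ω, X3 ω)) + rvMI p (fun ω => (X1 ω, X2 ω, X3 ω)) Y
        - rvMI p (fun ω => (X1 ω, X2 ω, X3 ω)) Z
      ≤ rvCMI p (fun ω => (X1 ω, X3 ω)) Y X2 + rvCMI p (fun ω => (X1 ω, X2 ω)) Y X3
        - rvMI p (fun ω => (X1 ω, X2 ω, X3 ω)) Z := by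
  have hd1 : ∑ a1, rvDist p X1 a1 = 1 := by rw [rvDist_sum]; exact hsum
  have hd2 : ∑ a2, rvDist p X2 a2 = 1 := by rw [rvDist_sum]; exact hsum
  have hd3 : ∑ a3, rvDist p X3 a3 = 1 := by rw [rvDist_sum]; exact hsum
  -- independence of X2, X3
  have hindep23 : ∀ a2 a3, rvDist p (fun ω => (X2 ω, X3 ω)) (a2, a3)
      = rvDist p X2 a2 * rvDist p X3 a3 := by
    intro a2 a3
    rw [← rvDist_marg_fst p X1 (fun ω => (X2 ω, X3 ω)) (a2, a3)]
    simp only [hindep]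
    rw [← Finset.sum_mul, ← Finset.sum_mul, hd1, one_mul]
  have hent23 : rvEnt p (fun ω => (X2 ω, X3 ω)) = rvEnt p X2 + rvEnt p X3 := by
    unfold rvEnt
    rw [Fintype.sum_prod_type]
    simp only [hindep23, Real.negMulLog_mul]
    simp only [Finset.sum_add_distrib, ← Finset.sum_mul, ← Finset.mul_sum]
    rw [hd3, hd2]
    simp [mul_comm]
  -- entropy reshuffles
  have e1 : rvEnt p (fun ω => ((X1 ω, X2 ω, X3 ω), Y ω))
      = rvEnt p (fun ω => (X1 ω, Y ω, X2 ω, X3 ω)) := by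
    have hf : Function.Injective
        (fun x : A1 × B × A2 × A3 => ((x.1, x.2.2.1, x.2.2.2), x.2.1)) := by
      intro x y h
      simp only [Prod.mk.injEq] at h
      exact Prod.ext h.1.1 (Prod.ext h.2 (Prod.ext h.1.2.1 h.1.2.2))
    exact (rvEnt_comp p _ hf (fun ω => (X1 ω, Y ω, X2 ω, X3 ω)))
  have e2 : rvEnt p (fun ω => ((X1 ω, X3 ω), X2 ω))
      = rvEnt p (fun ω => (X1 ω, X2 ω, X3 ω)) := by
    have hf : Function.Injective
        (fun x : A1 × A2 × A3 => ((x.1, x.2.2), x.2.1)) := by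
      intro x y h
      simp only [Prod.mk.injEq] at h
      exact Prod.ext h.1.1 (Prod.ext h.2 h.1.2)
    exact (rvEnt_comp p _ hf (fun ω => (X1 ω, X2 ω, X3 ω)))
  have e3 : rvEnt p (fun ω => ((X1 ω, X3 ω), Y ω, X2 ω))
      = rvEnt p (fun ω => (X1 ω, Y ω, X2 ω, X3 ω)) := by
    have hf : Function.Injective
        (fun x : A1 × B × A2 × A3 => ((x.1, x.2.2.2), x.2.1, x.2.2.1)) := by
      intro x y h
      simp only [Prod.mk.injEq] at h
      exact Prod.ext h.1.1 (Prod.ext h.2.1 (Prod.ext h.2.2 h.1.2))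
    exact (rvEnt_comp p _ hf (fun ω => (X1 ω, Y ω, X2 ω, X3 ω)))
  have e4 : rvEnt p (fun ω => ((X1 ω, X2 ω), X3 ω))
      = rvEnt p (fun ω => (X1 ω, X2 ω, X3 ω)) := by
    have hf : Function.Injective
        (fun x : A1 × A2 × A3 => ((x.1, x.2.1), x.2.2)) := by
      intro x y h
      simp only [Prod.mk.injEq] at h
      exact Prod.ext h.1.1 (Prod.ext h.1.2 h.2)
    exact (rvEnt_comp p _ hf (fun ω => (X1 ω, X2 ω, X3 ω)))
  have e5 : rvEnt p (fun ω => ((X1 ω, X2 ω), Y ω, X3 ω))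
      = rvEnt p (fun ω => (X1 ω, Y ω, X2 ω, X3 ω)) := by
    have hf : Function.Injective
        (fun x : A1 × B × A2 × A3 => ((x.1, x.2.2.1), x.2.1, x.2.2.2)) := by
      intro x y h
      simp only [Prod.mk.injEq] at h
      exact Prod.ext h.1.1 (Prod.ext h.2.1 (Prod.ext h.1.2 h.2.2))
    exact (rvEnt_comp p _ hf (fun ω => (X1 ω, Y ω, X2 ω, X3 ω)))
  -- submodularity for (Y, X2, X3)
  have hsubmod : rvEnt p (fun ω => (Y ω, X2 ω, X3 ω)) + rvEnt p Y
      ≤ rvEnt p (fun ω => (Y ω, X2 ω)) + rvEnt p (fun ω => (Y ω, X3 ω)) := by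
    have hq : ∀ (b : B) (u : A2) (v : A3),
        0 ≤ rvDist p (fun ω => (Y ω, X2 ω, X3 ω)) (b, u, v) :=
      fun b u v => rvDist_nonneg p hp _ _
    have h1 : rvEnt p (fun ω => (Y ω, X2 ω, X3 ω))
        = ∑ b, ∑ u, ∑ v, Real.negMulLog (rvDist p (fun ω => (Y ω, X2 ω, X3 ω)) (b, u, v)) := by
      unfold rvEnt
      rw [Fintype.sum_prod_type]
      exact Finset.sum_congr rfl fun b _ => Fintype.sum_prod_type _
    have h2 : rvEnt p Y
        = ∑ b, Real.negMulLog (∑ u, ∑ v, rvDist p (fun ω => (Y ω, X2 ω, X3 ω)) (b, u, v)) := by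
      unfold rvEnt
      refine Finset.sum_congr rfl fun b _ => ?_
      congr 1
      rw [← rvDist_marg_snd p Y (fun ω => (X2 ω, X3 ω)) b, Fintype.sum_prod_type]
    have h3 : rvEnt p (fun ω => (Y ω, X2 ω))
        = ∑ b, ∑ u, Real.negMulLog (∑ v, rvDist p (fun ω => (Y ω, X2 ω, X3 ω)) (b, u, v)) := by
      unfold rvEnt
      rw [Fintype.sum_prod_type]
      refine Finset.sum_congr rfl fun b _ => Finset.sum_congr rfl fun u _ => ?_
      rw [rvDist_marg_last p Y X2 X3 b u]
    have h4 : rvEnt p (fun ω => (Y ω, X3 ω))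
        = ∑ b, ∑ v, Real.negMulLog (∑ u, rvDist p (fun ω => (Y ω, X2 ω, X3 ω)) (b, u, v)) := by
      unfold rvEnt
      rw [Fintype.sum_prod_type]
      refine Finset.sum_congr rfl fun b _ => Finset.sum_congr rfl fun v _ => ?_
      rw [rvDist_marg_mid p Y X2 X3 b v]
    rw [h1, h2, h3, h4]
    exact submodular_aux' _ hq
  simp only [rvCMI, rvMI]
  linarith [e1, e2, e3, e4, e5, hent23, hsubmod]
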